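/- Let G be a bipartite graph on parts A and B of equal finite cardinality, in which every vertex (on either side) has degree at most m. Then the edge set of G can be covered by (the graphs of) m bijections from A to B; that is, there exist bijections h_1, …, h_m : A ≃ B such that every edge (a,b) of G satisfies h_k(a) = b for some k. -/

import Mathlib

/-!
Induction on `m`. If all degrees are at most `m + 1`, join every vertex of degree `< m + 1` in `A`
to every vertex of degree `< m + 1` in `B`. Double counting verifies Hall's condition for the
enlarged relation, so it contains a bijection `e`, and `e` uses an edge of the original graph at
every vertex of full degree `m + 1`. Removing the edges of `e` leaves a graph of maximal degree
`m`, which is covered by `m` bijections by induction.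
-/

open Finset

section

variable {α β : Type*} [Fintype α] [Fintype β]

lemma card_le_card_filter_exists_rel_of_degree {r : α → β → Prop} [DecidableRel r] {m : ℕ}
    (hm : 0 < m) {s : Finset α} (hs : ∀ a ∈ s, m ≤ #{b | r a b})
    (hr : ∀ b, #{a | r a b} ≤ m) :
    #s ≤ #{b | ∃ a ∈ s, r a b} := by
  refine Nat.le_of_mul_le_mul_right (card_mul_le_card_mul r ?_ fun b _ => ?_) hm
  · intro a ha
    refine (hs a ha).trans (card_le_card fun b hb => ?_)
    simp only [bipartiteAbove, mem_filter, mem_univ, true_and] at hb ⊢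
    exact ⟨⟨a, ha, hb⟩, hb⟩
  · exact (card_le_card (filter_subset_filter _ (subset_univ s))).trans (hr b)

lemma card_erase_le_of_card_eq_imp_mem {γ : Type*} [DecidableEq γ] {s : Finset γ} {x : γ} {n : ℕ}
    (hs : #s ≤ n + 1) (hx : #s = n + 1 → x ∈ s) : #(s.erase x) ≤ n := by
  by_cases hxs : x ∈ s
  · rw [card_erase_of_mem hxs]
    omega
  · rw [erase_eq_of_notMem hxs]
    have := mt hx hxs
    omega

section Deficient

variable (r : α → β → Prop) [DecidableRel r] (m : ℕ)

def padDeficient (a : α) (b : β) : Prop :=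
  r a b ∨ (#{b | r a b} < m ∧ #{a | r a b} < m)

instance : DecidableRel (padDeficient r m) := fun _ _ => by
  unfold padDeficient
  infer_instance

variable {r m}

lemma card_le_card_filter_exists_padDeficient (hcard : Fintype.card α = Fintype.card β)
    (hm : 0 < m) (hα : ∀ a, #{b | r a b} ≤ m) (hβ : ∀ b, #{a | r a b} ≤ m) (s : Finset α) :
    #s ≤ #{b | ∃ a ∈ s, padDeficient r m a b} := by
  classical
  by_cases hfull : ∀ a ∈ s, #{b | r a b} = m
  · calc #s ≤ #{b | ∃ a ∈ s, r a b} :=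
          card_le_card_filter_exists_rel_of_degree hm (fun a ha => (hfull a ha).ge) hβ
      _ ≤ _ := card_le_card (monotone_filter_right _ fun _ _ ⟨a, ha, hab⟩ => ⟨a, ha, Or.inl hab⟩)
  push Not at hfull
  obtain ⟨a₀, ha₀, hdeg₀⟩ := hfull
  set N : Finset β := {b | ∃ a ∈ s, padDeficient r m a b}
  -- Outside `N` every vertex has full degree (it is not joined to `a₀`) and all its
  -- neighbours lie outside `s`; double counting in the reverse direction bounds `#Nᶜ`.
  have hcompl : #Nᶜ ≤ #sᶜ := by
    have hNc : ∀ b ∈ Nᶜ, ∀ a ∈ s, ¬ padDeficient r m a b := by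
      intro b hb a ha hab
      exact mem_compl.1 hb (mem_filter.2 ⟨mem_univ b, a, ha, hab⟩)
    calc #Nᶜ ≤ #{a | ∃ b ∈ Nᶜ, r a b} := by
          refine card_le_card_filter_exists_rel_of_degree (r := fun b a => r a b) hm
            (fun b hb => ?_) hα
          by_contra hlt
          exact hNc b hb a₀ ha₀ (Or.inr ⟨lt_of_le_of_ne (hα a₀) hdeg₀, not_le.1 hlt⟩)
      _ ≤ #sᶜ := card_le_card fun a ha => by
          obtain ⟨b, hb, hab⟩ := (mem_filter.1 ha).2
          exact mem_compl.2 fun has => hNc b hb a has (Or.inl hab)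
  rw [card_compl, card_compl] at hcompl
  have := card_le_univ s
  have := card_le_univ N
  omega

lemma exists_equiv_forall_padDeficient (hcard : Fintype.card α = Fintype.card β) (hm : 0 < m)
    (hα : ∀ a, #{b | r a b} ≤ m) (hβ : ∀ b, #{a | r a b} ≤ m) :
    ∃ e : α ≃ β, ∀ a, padDeficient r m a (e a) := by
  obtain ⟨f, hf, hfr⟩ := (Fintype.all_card_le_filter_rel_iff_exists_injective _).1
    (card_le_card_filter_exists_padDeficient hcard hm hα hβ)
  exact ⟨.ofBijective f ((Fintype.bijective_iff_injective_and_card f).2 ⟨hf, hcard⟩), hfr⟩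

end Deficient

lemma exists_equiv_residual_degree_le [DecidableEq α] [DecidableEq β] {r : α → β → Prop}
    [DecidableRel r] {n : ℕ} (hcard : Fintype.card α = Fintype.card β)
    (hα : ∀ a, #{b | r a b} ≤ n + 1) (hβ : ∀ b, #{a | r a b} ≤ n + 1) :
    ∃ e : α ≃ β, (∀ a, #{b | r a b ∧ e a ≠ b} ≤ n) ∧ (∀ b, #{a | r a b ∧ e a ≠ b} ≤ n) := by
  obtain ⟨e, he⟩ := exists_equiv_forall_padDeficient hcard n.succ_pos hα hβ
  refine ⟨e, fun a => ?_, fun b => ?_⟩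
  · have : ({b | r a b ∧ e a ≠ b} : Finset β) = ({b | r a b} : Finset β).erase (e a) := by
      ext b
      simp [and_comm, eq_comm]
    rw [this]
    refine card_erase_le_of_card_eq_imp_mem (hα a) fun hdeg => ?_
    simpa [padDeficient, hdeg] using he a
  · have : ({a | r a b ∧ e a ≠ b} : Finset α) = ({a | r a b} : Finset α).erase (e.symm b) := by
      ext a
      simp [and_comm, Equiv.eq_symm_apply]
    rw [this]
    refine card_erase_le_of_card_eq_imp_mem (hβ b) fun hdeg => ?_
    simpa [padDeficient, hdeg] using he (e.symm b)

theorem exists_fin_equiv_cover (hcard : Fintype.card α = Fintype.card β) :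
    ∀ (m : ℕ) (r : α → β → Prop) [DecidableRel r], (∀ a, #{b | r a b} ≤ m) →
      (∀ b, #{a | r a b} ≤ m) → ∃ h : Fin m → α ≃ β, ∀ a b, r a b → ∃ k, h k a = b
  | 0, r, _, hα, _ => ⟨Fin.elim0, fun a b hab =>
      ((card_pos.2 ⟨b, mem_filter.2 ⟨mem_univ b, hab⟩⟩).not_ge (hα a)).elim⟩
  | n + 1, r, _, hα, hβ => by
    classical
    obtain ⟨e, heα, heβ⟩ := exists_equiv_residual_degree_le hcard hα hβ
    obtain ⟨h, hh⟩ := exists_fin_equiv_cover hcard n (fun a b => r a b ∧ e a ≠ b) heα heβ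
    refine ⟨Fin.cons e h, fun a b hab => ?_⟩
    by_cases hb : e a = b
    · exact ⟨0, by simpa using hb⟩
    · obtain ⟨k, hk⟩ := hh a b ⟨hab, hb⟩
      exact ⟨k.succ, by simpa using hk⟩

end

/-- A bipartite graph on parts of equal finite cardinality with all degrees at most `m`
can be covered by `m` bijections. -/
theorem cover_by_bijections {A B : Type*} [Fintype A] [Fintype B]
    (hcard : Fintype.card A = Fintype.card B) (m : ℕ)
    (E : A → B → Prop) [∀ a, DecidablePred (E a)]
    (hA : ∀ a, (Finset.univ.filter (fun b => E a b)).card ≤ m)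
    (hB : ∀ b, (Finset.univ.filter (fun a => E a b)).card ≤ m) :
    ∃ h : Fin m → (A ≃ B), ∀ a b, E a b → ∃ k, h k a = b :=
  exists_fin_equiv_cover hcard m E hA hB
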